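/- Let K[u,v] be graded by ℤ/cℤ with deg u = ā, deg v = b̄ (images of positive integers a, b with a > b). If φ̃ = (f̃, g̃) is a graded automorphism of K[u,v] such that f̃ contains no monomial v^q with bq < a and g̃ has zero constant term, then there exists a graded automorphism φ of K[x,y,z] (with deg x = a, deg y = b, deg z = -c) fixing z with α(φ) = φ̃. -/

import Mathlib

open MvPolynomial

variable {K : Type*}

/-- Homogeneity for the ℤ-grading of `K[x,y,z]` with `deg x = a, deg y = b, deg z = -c`. -/
def IsWtHom [CommRing K] (a b c : ℕ) (p : MvPolynomial (Fin 3) K) (d : ℤ) : Prop :=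
  ∀ m ∈ p.support, (a : ℤ) * (m 0 : ℤ) + (b : ℤ) * (m 1 : ℤ) - (c : ℤ) * (m 2 : ℤ) = d

/-- Graded automorphism of `K[x,y,z]` for this grading. -/
def IsGradedAut [CommRing K] (a b c : ℕ)
    (φ : MvPolynomial (Fin 3) K ≃ₐ[K] MvPolynomial (Fin 3) K) : Prop :=
  ∀ (d : ℤ) (p : MvPolynomial (Fin 3) K), IsWtHom a b c p d → IsWtHom a b c (φ p) d

/-- Homogeneity for the `ℤ/cℤ`-grading of `K[u,v]` with `deg u = ā, deg v = b̄`. -/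
def IsModHom [CommRing K] (a b c : ℕ) (p : MvPolynomial (Fin 2) K) (d : ZMod c) : Prop :=
  ∀ m ∈ p.support, (m 0 : ZMod c) * (a : ZMod c) + (m 1 : ZMod c) * (b : ZMod c) = d

/-- The substitution `z = 1`. -/
noncomputable def subZ [CommRing K] :
    MvPolynomial (Fin 3) K →ₐ[K] MvPolynomial (Fin 2) K :=
  aeval ![X 0, X 1, 1]

/-!
Homogenize `f̃` and `g̃` with respect to `z`. A monomial `uⁱvʲ` of `f̃` has `ai + bj ≡ a (mod c)`,
and `ai + bj ≥ a`: trivially if `i > 0`, by hypothesis if `i = 0`. Multiplying it by a suitable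
power of `z` makes it homogeneous of degree `a`; this gives `F` with `F(z = 1) = f̃`, and likewise
`G` of degree `b`. Then `Φ = (F, G, z)` is graded and lies over `φ̃` under `z = 1`.

Since `z = 1` is injective on each homogeneous piece, `Φ` is injective. For surjectivity, lift
`φ̃⁻¹(uᵢ)` to a homogeneous polynomial of low enough degree: `Φ` maps it to `zᴺxᵢ`. Modulo `z`,
`Φ` is the triangular map `(αu + w(v), δv)`, where `α`, `δ` are the diagonal entries of the lower
triangular Jacobian of `φ̃` at the origin, hence nonzero. So `Φ` is injective modulo `z`, which
lets one cancel the powers of `z`.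
-/

namespace MvPolynomial

section PreservesWeight

variable {R σ M : Type*} [CommSemiring R] [AddCommMonoid M]

def PreservesWeight (w : σ → M) (Φ : MvPolynomial σ R →ₐ[R] MvPolynomial σ R) : Prop :=
  ∀ ⦃m : M⦄ ⦃p : MvPolynomial σ R⦄, IsWeightedHomogeneous w p m → IsWeightedHomogeneous w (Φ p) m

variable {w : σ → M} {Φ : MvPolynomial σ R →ₐ[R] MvPolynomial σ R}

theorem preservesWeight_aeval {F : σ → MvPolynomial σ R}
    (hF : ∀ i, IsWeightedHomogeneous w (F i) (w i)) : PreservesWeight w (aeval F) := by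
  intro m p hp
  induction hp using IsWeightedHomogeneous.induction_on with
  | zero => simpa using isWeightedHomogeneous_zero R w m
  | add p q _ _ hp hq => simpa using hp.add hq
  | monomial d r hd =>
    rw [aeval_monomial, algebraMap_eq, ← hd, Finsupp.weight_apply]
    exact ((IsWeightedHomogeneous.prod _ _ _ fun i _ => (hF i).pow (d i))).C_mul r

theorem PreservesWeight.weightedHomogeneousComponent_map [DecidableEq M] (hΦ : PreservesWeight w Φ)
    (n : M) (p : MvPolynomial σ R) :
    weightedHomogeneousComponent w n (Φ p) = Φ (weightedHomogeneousComponent w n p) := by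
  induction p using MvPolynomial.induction_on' with
  | monomial d r =>
    have hd := isWeightedHomogeneous_monomial w d r rfl
    rw [weightedHomogeneousComponent_of_mem hd, weightedHomogeneousComponent_of_mem (hΦ hd)]
    split_ifs <;> simp
  | add p q hp hq => simp only [map_add, hp, hq]

theorem PreservesWeight.isWeightedHomogeneous_of_map (hΦ : PreservesWeight w Φ)
    (hinj : Function.Injective Φ) {p : MvPolynomial σ R} {m : M}
    (hp : IsWeightedHomogeneous w (Φ p) m) : IsWeightedHomogeneous w p m := by
  classical
  intro d hd
  by_contra hne
  have hzero : weightedHomogeneousComponent w (Finsupp.weight w d) p = 0 := by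
    apply hinj
    rw [← hΦ.weightedHomogeneousComponent_map, hp.weightedHomogeneousComponent_ne _ hne, map_zero]
  apply hd
  simpa [coeff_weightedHomogeneousComponent] using congr_arg (coeff d) hzero

end PreservesWeight

section PreservesWeightRing

variable {R σ M : Type*} [CommRing R] [AddCommMonoid M] {w : σ → M}
  {Φ : MvPolynomial σ R →ₐ[R] MvPolynomial σ R}

theorem PreservesWeight.injective (hΦ : PreservesWeight w Φ)
    (h : ∀ m p, IsWeightedHomogeneous w p m → Φ p = 0 → p = 0) : Function.Injective Φ := by
  classical
  refine (injective_iff_map_eq_zero Φ).mpr fun p hp => ?_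
  ext d
  have hzero : weightedHomogeneousComponent w (Finsupp.weight w d) p = 0 :=
    h _ _ (weightedHomogeneousComponent_isWeightedHomogeneous _ _)
      (by rw [← hΦ.weightedHomogeneousComponent_map, hp, map_zero])
  simpa [coeff_weightedHomogeneousComponent] using congr_arg (coeff d) hzero

end PreservesWeightRing

section LinearCoeff

variable {R σ τ : Type*} [CommSemiring R]

theorem pderiv_aeval [Fintype σ] (F : σ → MvPolynomial τ R) (p : MvPolynomial σ R) (i : τ) :
    pderiv i (aeval F p) = ∑ j, aeval F (pderiv j p) * pderiv i (F j) := by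
  classical
  induction p using MvPolynomial.induction_on with
  | C r => simp only [aeval_C, algebraMap_eq, pderiv_C, map_zero, zero_mul, Finset.sum_const_zero]
  | add p q hp hq => simp only [map_add, hp, hq, add_mul, Finset.sum_add_distrib]
  | mul_X p k hp =>
    simp only [map_mul, aeval_X, Derivation.leibniz, hp, pderiv_X, Pi.single_apply, smul_eq_mul,
      mul_ite, mul_one, mul_zero, map_add, add_mul, Finset.sum_add_distrib, Finset.mul_sum,
      apply_ite (aeval F), map_zero, ite_mul, zero_mul, Finset.sum_ite_eq, Finset.mem_univ,
      if_true, mul_assoc]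

theorem constantCoeff_aeval {F : σ → MvPolynomial τ R} (hF : ∀ j, constantCoeff (F j) = 0)
    (p : MvPolynomial σ R) : constantCoeff (aeval F p) = constantCoeff p := by
  induction p using MvPolynomial.induction_on with
  | C r => simp
  | add p q hp hq => rw [map_add, map_add, map_add, hp, hq]
  | mul_X p k hp => rw [map_mul, map_mul, map_mul, hp, aeval_X, hF, constantCoeff_X]

theorem coeff_single_one_eq_constantCoeff_pderiv (i : σ) (p : MvPolynomial σ R) :
    coeff (Finsupp.single i 1) p = constantCoeff (pderiv i p) := by
  rw [constantCoeff_eq, coeff_pderiv]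
  simp

theorem coeff_single_one_aeval [Fintype σ] {F : σ → MvPolynomial τ R}
    (hF : ∀ j, constantCoeff (F j) = 0) (p : MvPolynomial σ R) (i : τ) :
    coeff (Finsupp.single i 1) (aeval F p) =
      ∑ j, coeff (Finsupp.single j 1) p * coeff (Finsupp.single i 1) (F j) := by
  simp only [coeff_single_one_eq_constantCoeff_pderiv, pderiv_aeval, map_sum, map_mul,
    constantCoeff_aeval hF]

end LinearCoeff

end MvPolynomial

theorem coeff_single_one_ne_zero_of_surjective [Field K] {f g : MvPolynomial (Fin 2) K}
    (hf0 : constantCoeff f = 0) (hg0 : constantCoeff g = 0)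
    (hfv : coeff (Finsupp.single 1 1) f = 0)
    (hsurj : Function.Surjective (aeval ![f, g] : MvPolynomial (Fin 2) K →ₐ[K] _)) :
    coeff (Finsupp.single 0 1) f ≠ 0 ∧ coeff (Finsupp.single 1 1) g ≠ 0 := by
  have hF : ∀ j, constantCoeff (![f, g] j) = 0 := Fin.forall_fin_two.mpr ⟨hf0, hg0⟩
  obtain ⟨p, hp⟩ := hsurj (X 0)
  obtain ⟨q, hq⟩ := hsurj (X 1)
  have hq1 := coeff_single_one_aeval hF q 1
  have hp1 := coeff_single_one_aeval hF p 1
  have hp0 := coeff_single_one_aeval hF p 0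
  simp only [hp, hq, coeff_X, Fin.sum_univ_two, Matrix.cons_val_zero, Matrix.cons_val_one, hfv,
    mul_zero, zero_add, if_true, Finsupp.single_eq_single_iff, zero_ne_one, and_false,
    one_ne_zero] at hq1 hp1 hp0
  have hδ : coeff (Finsupp.single 1 1) g ≠ 0 := right_ne_zero_of_mul (hq1 ▸ one_ne_zero)
  have hp1' : coeff (Finsupp.single 1 1) p = 0 := (mul_eq_zero.mp hp1.symm).resolve_right hδ
  rw [hp1', zero_mul, add_zero] at hp0
  exact ⟨right_ne_zero_of_mul (hp0 ▸ one_ne_zero), hδ⟩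

theorem injective_aeval_triangular [Field K] {α δ : K} (hα : α ≠ 0) (hδ : δ ≠ 0)
    {w : MvPolynomial (Fin 2) K} (hw : w ∈ supported K {1}) :
    Function.Injective (aeval ![C α * X 0 + w, C δ * X 1] : MvPolynomial (Fin 2) K →ₐ[K] _) := by
  set scale : MvPolynomial (Fin 2) K →ₐ[K] MvPolynomial (Fin 2) K := aeval ![X 0, C δ⁻¹ * X 1]
  set Ψ : MvPolynomial (Fin 2) K →ₐ[K] MvPolynomial (Fin 2) K :=
    aeval ![C α⁻¹ * (X 0 - scale w), C δ⁻¹ * X 1]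
  have hΨ0 : Ψ (X 0) = C α⁻¹ * (X 0 - scale w) := aeval_X _ _
  have hΨ1 : Ψ (X 1) = C δ⁻¹ * X 1 := aeval_X _ _
  have hΨC (r : K) : Ψ (C r) = C r := Ψ.commutes r
  have hΨw : Ψ w = scale w := by
    rw [supported_eq_adjoin_X, Set.image_singleton] at hw
    refine AlgHom.eqOn_adjoin_iff.mpr ?_ hw
    simp [hΨ1, scale]
  have hinv : Ψ.comp (aeval ![C α * X 0 + w, C δ * X 1]) = AlgHom.id K _ := by
    refine algHom_ext fun i => ?_
    fin_cases i <;>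
    simp only [AlgHom.comp_apply, AlgHom.id_apply, aeval_X, Fin.zero_eta, Fin.mk_one,
      Matrix.cons_val_zero, Matrix.cons_val_one, map_add, map_mul, hΨ0, hΨ1, hΨC, hΨw] <;>
    rw [← mul_assoc, ← map_mul, mul_inv_cancel₀ (by assumption), map_one, one_mul]
    exact sub_add_cancel _ _
  exact Function.LeftInverse.injective (g := Ψ) (AlgHom.congr_fun hinv)

section Weights

variable {a b c : ℕ}

def wXYZ (a b c : ℕ) : Fin 3 → ℤ := ![a, b, -c]

def wUV (a b c : ℕ) : Fin 2 → ZMod c := ![a, b]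

theorem weight_wXYZ (n : Fin 3 →₀ ℕ) :
    Finsupp.weight (wXYZ a b c) n = a * n 0 + b * n 1 - c * n 2 := by
  simp [Finsupp.weight_apply, Finsupp.sum_fintype, Fin.sum_univ_three, wXYZ]
  ring

theorem weight_wUV (m : Fin 2 →₀ ℕ) :
    Finsupp.weight (wUV a b c) m = m 0 * a + m 1 * b := by
  simp [Finsupp.weight_apply, Finsupp.sum_fintype, Fin.sum_univ_two, wUV]

theorem isWtHom_iff [CommRing K] {p : MvPolynomial (Fin 3) K} {d : ℤ} :
    IsWtHom a b c p d ↔ IsWeightedHomogeneous (wXYZ a b c) p d := by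
  simp [IsWtHom, IsWeightedHomogeneous, weight_wXYZ]

theorem isModHom_iff [CommRing K] {p : MvPolynomial (Fin 2) K} {d : ZMod c} :
    IsModHom a b c p d ↔ IsWeightedHomogeneous (wUV a b c) p d := by
  simp [IsModHom, IsWeightedHomogeneous, weight_wUV]

noncomputable def toUV (n : Fin 3 →₀ ℕ) : Fin 2 →₀ ℕ := Finsupp.equivFunOnFinite.symm ![n 0, n 1]

noncomputable def toXYZ (m : Fin 2 →₀ ℕ) (k : ℕ) : Fin 3 →₀ ℕ :=
  Finsupp.equivFunOnFinite.symm ![m 0, m 1, k]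

@[simp] theorem toUV_toXYZ (m : Fin 2 →₀ ℕ) (k : ℕ) : toUV (toXYZ m k) = m := by
  ext i; fin_cases i <;> simp [toUV, toXYZ]

theorem eq_toXYZ_iff {n : Fin 3 →₀ ℕ} {m : Fin 2 →₀ ℕ} {k : ℕ} :
    n = toXYZ m k ↔ toUV n = m ∧ n 2 = k := by
  constructor
  · rintro rfl; exact ⟨toUV_toXYZ m k, by simp [toXYZ]⟩
  · rintro ⟨rfl, rfl⟩; ext i; fin_cases i <;> simp [toUV, toXYZ]

theorem weight_wXYZ_toXYZ (m : Fin 2 →₀ ℕ) (k : ℕ) :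
    Finsupp.weight (wXYZ a b c) (toXYZ m k) = a * m 0 + b * m 1 - c * k := by
  simp [weight_wXYZ, toXYZ]

theorem aeval_monomial_eq_monomial_toUV [CommRing K] (q : MvPolynomial (Fin 2) K)
    (n : Fin 3 →₀ ℕ) (r : K) :
    aeval ![X 0, X 1, q] (monomial n r) = monomial (toUV n) r * q ^ n 2 := by
  rw [aeval_monomial, monomial_eq, Finsupp.prod_fintype _ _ fun _ => pow_zero _,
    Finsupp.prod_fintype _ _ fun _ => pow_zero _, Fin.prod_univ_three, Fin.prod_univ_two]
  simp [toUV, algebraMap_eq, mul_assoc]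

theorem subZ_monomial [CommRing K] (n : Fin 3 →₀ ℕ) (r : K) :
    subZ (monomial n r) = monomial (toUV n) r := by
  rw [subZ, aeval_monomial_eq_monomial_toUV, one_pow, mul_one]

/-- Since `c ≠ 0`, a monomial of given weight is determined by its `x`- and `y`-exponents. -/
theorem coeff_subZ_of_isWeightedHomogeneous [CommRing K] (hc : c ≠ 0)
    {P : MvPolynomial (Fin 3) K} {d : ℤ} (hP : IsWeightedHomogeneous (wXYZ a b c) P d)
    {n : Fin 3 →₀ ℕ} (hn : Finsupp.weight (wXYZ a b c) n = d) :
    coeff (toUV n) (subZ P) = coeff n P := by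
  classical
  induction hP using IsWeightedHomogeneous.induction_on with
  | zero => simp
  | add p q _ _ hp hq => simp [hp, hq]
  | monomial n' r hn' =>
    rw [subZ_monomial, coeff_monomial, coeff_monomial]
    refine if_congr ⟨fun h => ?_, fun h => h ▸ rfl⟩ rfl rfl
    rw [← hn, weight_wXYZ, weight_wXYZ] at hn'
    have h2 : n' 2 = n 2 := by
      have h0 : n' 0 = n 0 := by simpa [toUV] using congr_arg (· 0) h
      have h1 : n' 1 = n 1 := by simpa [toUV] using congr_arg (· 1) h
      rw [h0, h1] at hn'
      have hc' : (c : ℤ) ≠ 0 := by exact_mod_cast hc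
      exact_mod_cast mul_left_cancel₀ hc' (by linarith : (c : ℤ) * n' 2 = c * n 2)
    exact (eq_toXYZ_iff.mpr ⟨h, h2⟩).trans (eq_toXYZ_iff.mpr ⟨rfl, rfl⟩).symm

theorem eq_zero_of_subZ_eq_zero [CommRing K] (hc : c ≠ 0) {P : MvPolynomial (Fin 3) K} {d : ℤ}
    (hP : IsWeightedHomogeneous (wXYZ a b c) P d) (h : subZ P = 0) : P = 0 := by
  ext n
  by_cases hn : coeff n P = 0
  · rw [hn, coeff_zero]
  · rw [← coeff_subZ_of_isWeightedHomogeneous hc hP (hP hn), h, coeff_zero, coeff_zero]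

theorem isWeightedHomogeneous_subZ [CommRing K] {P : MvPolynomial (Fin 3) K} {d : ℤ}
    (hP : IsWeightedHomogeneous (wXYZ a b c) P d) :
    IsWeightedHomogeneous (wUV a b c) (subZ P) (d : ZMod c) := by
  induction hP using IsWeightedHomogeneous.induction_on with
  | zero => simpa using isWeightedHomogeneous_zero K _ _
  | add p q _ _ hp hq => simpa using hp.add hq
  | monomial n r hn =>
    rw [subZ_monomial]
    refine isWeightedHomogeneous_monomial _ _ _ ?_
    rw [← hn, weight_wXYZ, weight_wUV]
    simp [toUV, mul_comm]

theorem exists_nat_sub_mul_eq {S d : ℤ} (h : (S : ZMod c) = d) (hle : d ≤ S) :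
    ∃ k : ℕ, S - c * k = d := by
  obtain ⟨k, hk⟩ := (ZMod.intCast_eq_intCast_iff_dvd_sub d S c).mp h.symm
  refine ⟨k.toNat, ?_⟩
  rcases Nat.eq_zero_or_pos c with rfl | hc
  · simp only [Nat.cast_zero, zero_mul] at hk ⊢
    linarith
  · have hk0 : 0 ≤ k := by
      by_contra hneg
      nlinarith [(by exact_mod_cast hc : (0 : ℤ) < c)]
    rw [Int.toNat_of_nonneg hk0]
    linarith

theorem exists_isWeightedHomogeneous_subZ_eq [CommRing K] {p : MvPolynomial (Fin 2) K} {d : ℤ}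
    (hp : IsWeightedHomogeneous (wUV a b c) p d)
    (hge : ∀ m ∈ p.support, d ≤ a * m 0 + b * m 1) :
    ∃ P, IsWeightedHomogeneous (wXYZ a b c) P d ∧ subZ P = p := by
  suffices p ∈ (weightedHomogeneousSubmodule K (wXYZ a b c) d).map subZ.toLinearMap by
    simpa [mem_weightedHomogeneousSubmodule] using this
  rw [p.as_sum]
  refine Submodule.sum_mem _ fun m hm => ?_
  have hmod : (((a * m 0 + b * m 1 : ℤ)) : ZMod c) = d := by
    rw [← hp (mem_support_iff.mp hm), weight_wUV]
    push_cast
    ring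
  obtain ⟨k, hk⟩ := exists_nat_sub_mul_eq hmod (hge m hm)
  refine ⟨monomial (toXYZ m k) (coeff m p), ?_, by simp [subZ_monomial]⟩
  exact isWeightedHomogeneous_monomial _ _ _ (by rw [weight_wXYZ_toXYZ, hk])

noncomputable def subZ0 [CommRing K] : MvPolynomial (Fin 3) K →ₐ[K] MvPolynomial (Fin 2) K :=
  aeval ![X 0, X 1, 0]

theorem coeff_subZ0 [CommRing K] (P : MvPolynomial (Fin 3) K) (m : Fin 2 →₀ ℕ) :
    coeff m (subZ0 P) = coeff (toXYZ m 0) P := by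
  classical
  induction P using MvPolynomial.induction_on' with
  | monomial n r =>
    rw [subZ0, aeval_monomial_eq_monomial_toUV, coeff_monomial]
    rcases eq_or_ne (n 2) 0 with h | h
    · rw [h, pow_zero, mul_one, coeff_monomial]
      simp [eq_toXYZ_iff, h]
    · rw [zero_pow h, mul_zero, coeff_zero, if_neg (fun e => h (by simp [e, toXYZ]))]
  | add p q hp hq => simp only [map_add, coeff_add, hp, hq]

theorem X_two_dvd_of_subZ0_eq_zero [CommRing K] {s : MvPolynomial (Fin 3) K} (h : subZ0 s = 0) :
    X 2 ∣ s := by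
  rw [X_dvd_iff_modMonomial_eq_zero]
  ext n
  rw [coeff_zero]
  by_cases hn : Finsupp.single 2 1 ≤ n
  · exact coeff_modMonomial_of_le s hn
  · have hn2 : n 2 = 0 := by simpa [Finsupp.single_le_iff] using hn
    rw [coeff_modMonomial_of_not_le s hn, eq_toXYZ_iff.mpr ⟨rfl, hn2⟩, ← coeff_subZ0, h,
      coeff_zero]

theorem coeff_subZ0_of_isWeightedHomogeneous [CommRing K] (hc : c ≠ 0)
    {P : MvPolynomial (Fin 3) K} {d : ℤ} (hP : IsWeightedHomogeneous (wXYZ a b c) P d)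
    (m : Fin 2 →₀ ℕ) :
    coeff m (subZ0 P) = if (a * m 0 + b * m 1 : ℤ) = d then coeff m (subZ P) else 0 := by
  have hw : Finsupp.weight (wXYZ a b c) (toXYZ m 0) = a * m 0 + b * m 1 := by
    simp [weight_wXYZ_toXYZ]
  rw [coeff_subZ0]
  split_ifs with h
  · rw [← coeff_subZ_of_isWeightedHomogeneous hc hP (hw.trans h), toUV_toXYZ]
  · exact hP.coeff_eq_zero _ (hw ▸ h)

theorem comp_aeval_eq_aeval_comp [CommRing K]
    {ψ : MvPolynomial (Fin 3) K →ₐ[K] MvPolynomial (Fin 2) K} (h0 : ψ (X 0) = X 0)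
    (h1 : ψ (X 1) = X 1) {s : K} (h2 : ψ (X 2) = C s) (F G : MvPolynomial (Fin 3) K) :
    ψ.comp (aeval ![F, G, X 2]) = (aeval ![ψ F, ψ G]).comp ψ := by
  refine algHom_ext fun i => ?_
  fin_cases i <;> simp [h0, h1, h2]

theorem subZ_comp_aeval [CommRing K] (F G : MvPolynomial (Fin 3) K) :
    subZ.comp (aeval ![F, G, X 2]) = (aeval ![subZ F, subZ G]).comp subZ :=
  comp_aeval_eq_aeval_comp (s := 1) (aeval_X _ _) (aeval_X _ _) ((aeval_X _ _).trans C_1.symm) F G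

theorem subZ0_comp_aeval [CommRing K] (F G : MvPolynomial (Fin 3) K) :
    subZ0.comp (aeval ![F, G, X 2]) = (aeval ![subZ0 F, subZ0 G]).comp subZ0 :=
  comp_aeval_eq_aeval_comp (s := 0) (aeval_X _ _) (aeval_X _ _) ((aeval_X _ _).trans C_0.symm) F G

theorem eq_single_one_one_of_weight_eq (hb : 0 < b) (hab : b < a) {m : Fin 2 →₀ ℕ}
    (h : (a * m 0 + b * m 1 : ℤ) = b) : m = Finsupp.single 1 1 := by
  have h' : a * m 0 + b * m 1 = b := by exact_mod_cast h
  have h0 : m 0 = 0 := by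
    by_contra h0
    have := Nat.le_mul_of_pos_right a (Nat.pos_of_ne_zero h0)
    omega
  have h1 : m 1 = 1 := Nat.eq_of_mul_eq_mul_left hb (by rw [h0] at h'; omega)
  ext i; fin_cases i <;> simp [h0, h1]

theorem eq_single_zero_one_of_weight_eq (ha : 0 < a) (hb : 0 < b) {m : Fin 2 →₀ ℕ}
    (h : (a * m 0 + b * m 1 : ℤ) = a) (h0 : m 0 ≠ 0) : m = Finsupp.single 0 1 := by
  have h' : a * m 0 + b * m 1 = a := by exact_mod_cast h
  have hle := Nat.le_mul_of_pos_right a (Nat.pos_of_ne_zero h0)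
  have h1 : m 1 = 0 := by
    rcases Nat.eq_zero_or_pos (m 1) with h1 | h1
    · exact h1
    · have := Nat.mul_pos hb h1; omega
  have h0' : m 0 = 1 := Nat.eq_of_mul_eq_mul_left ha (by rw [h1] at h'; omega)
  ext i; fin_cases i <;> simp [h0', h1]

theorem subZ0_eq_C_mul_X_one [CommRing K] (hc : c ≠ 0) (hb : 0 < b) (hab : b < a)
    {G : MvPolynomial (Fin 3) K} (hG : IsWeightedHomogeneous (wXYZ a b c) G b) :
    subZ0 G = C (coeff (Finsupp.single 1 1) (subZ G)) * X 1 := by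
  classical
  ext m
  rw [coeff_subZ0_of_isWeightedHomogeneous hc hG, coeff_C_mul, coeff_X]
  by_cases h : (a * m 0 + b * m 1 : ℤ) = b
  · rw [if_pos h, eq_single_one_one_of_weight_eq hb hab h, if_pos rfl, mul_one]
  · rw [if_neg h, if_neg (by rintro rfl; simp at h), mul_zero]

theorem subZ0_sub_C_mul_X_zero_mem_supported [CommRing K] (hc : c ≠ 0) (ha : 0 < a) (hb : 0 < b)
    {F : MvPolynomial (Fin 3) K} (hF : IsWeightedHomogeneous (wXYZ a b c) F a) :
    subZ0 F - C (coeff (Finsupp.single 0 1) (subZ F)) * X 0 ∈ supported K {1} := by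
  classical
  rw [mem_supported]
  intro i hi
  obtain ⟨m, hm, hi⟩ := (mem_vars_iff_mem_support i).mp hi
  fin_cases i
  · refine absurd ?_ (mem_support_iff.mp hm)
    rw [coeff_sub, coeff_subZ0_of_isWeightedHomogeneous hc hF, coeff_C_mul, coeff_X]
    by_cases h : (a * m 0 + b * m 1 : ℤ) = a
    · rw [if_pos h, eq_single_zero_one_of_weight_eq ha hb h (Finsupp.mem_support_iff.mp hi),
        if_pos rfl, mul_one, sub_self]
    · rw [if_neg h, if_neg (by rintro rfl; simp at h), mul_zero, sub_zero]
  · simp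

theorem injective_aeval_subZ0 [Field K] (hc : c ≠ 0) (hb : 0 < b) (hab : b < a)
    {F G : MvPolynomial (Fin 3) K} (hF : IsWeightedHomogeneous (wXYZ a b c) F a)
    (hG : IsWeightedHomogeneous (wXYZ a b c) G b)
    (hα : coeff (Finsupp.single 0 1) (subZ F) ≠ 0) (hδ : coeff (Finsupp.single 1 1) (subZ G) ≠ 0) :
    Function.Injective (aeval ![subZ0 F, subZ0 G] : MvPolynomial (Fin 2) K →ₐ[K] _) := by
  rw [subZ0_eq_C_mul_X_one hc hb hab hG, ← add_sub_cancel (C _ * X 0) (subZ0 F)]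
  exact injective_aeval_triangular hα hδ
    (subZ0_sub_C_mul_X_zero_mem_supported hc (hb.trans hab) hb hF)

theorem le_weight_of_coeff_single_one_eq_zero [CommRing K] {p : MvPolynomial (Fin 2) K}
    (hp : ∀ q : ℕ, b * q < a → coeff (Finsupp.single 1 q) p = 0) :
    ∀ m ∈ p.support, (a : ℤ) ≤ a * m 0 + b * m 1 := by
  intro m hm
  suffices a ≤ a * m 0 + b * m 1 by exact_mod_cast this
  rcases Nat.eq_zero_or_pos (m 0) with h0 | h0
  · have hm' : m = Finsupp.single 1 (m 1) := by ext i; fin_cases i <;> simp [h0]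
    rw [hm'] at hm
    have := mt (hp (m 1)) (mem_support_iff.mp hm)
    omega
  · have := Nat.le_mul_of_pos_right a h0
    omega

theorem le_weight_of_coeff_zero_eq_zero [CommRing K] {p : MvPolynomial (Fin 2) K} (hab : b ≤ a)
    (hp : coeff 0 p = 0) :
    ∀ m ∈ p.support, (b : ℤ) ≤ a * m 0 + b * m 1 := by
  intro m hm
  suffices b ≤ a * m 0 + b * m 1 by exact_mod_cast this
  have hm0 : m ≠ 0 := by rintro rfl; exact mem_support_iff.mp hm hp
  rcases Nat.eq_zero_or_pos (m 0) with h0 | h0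
  · have h1 : m 1 ≠ 0 := fun h1 => hm0 (by ext i; fin_cases i <;> simp [h0, h1])
    have := Nat.le_mul_of_pos_right b (Nat.pos_of_ne_zero h1)
    omega
  · have := Nat.le_mul_of_pos_right a h0
    omega

theorem preservesWeight_aeval_wXYZ [CommRing K] {F G : MvPolynomial (Fin 3) K}
    (hF : IsWeightedHomogeneous (wXYZ a b c) F a) (hG : IsWeightedHomogeneous (wXYZ a b c) G b) :
    PreservesWeight (wXYZ a b c) (aeval ![F, G, X 2]) :=
  preservesWeight_aeval fun i => by
    fin_cases i
    exacts [hF, hG, isWeightedHomogeneous_X K _ 2]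

end Weights

section Bijectivity

variable {a b c : ℕ} [CommRing K] {Φ : MvPolynomial (Fin 3) K →ₐ[K] MvPolynomial (Fin 3) K}
  {φ : MvPolynomial (Fin 2) K →ₐ[K] MvPolynomial (Fin 2) K}

theorem injective_of_subZ_comp (hc : c ≠ 0) (hΦ : PreservesWeight (wXYZ a b c) Φ)
    (hφ : Function.Injective φ) (hcomm : subZ.comp Φ = φ.comp subZ) : Function.Injective Φ :=
  hΦ.injective fun _ p hp h0 => eq_zero_of_subZ_eq_zero hc hp <| hφ <| by
    rw [← AlgHom.comp_apply, ← hcomm, AlgHom.comp_apply, h0, map_zero, map_zero]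

theorem exists_X_two_pow_mul_mem_range (hc : 0 < c) (hΦ : PreservesWeight (wXYZ a b c) Φ)
    (hφ : PreservesWeight (wUV a b c) φ) (hφinj : Function.Injective φ)
    (hcomm : subZ.comp Φ = φ.comp subZ) {P : MvPolynomial (Fin 3) K} {e : ℤ}
    (hP : IsWeightedHomogeneous (wXYZ a b c) P e) (hPφ : subZ P ∈ φ.range) :
    ∃ N : ℕ, X 2 ^ N * P ∈ Φ.range := by
  obtain ⟨q, hq⟩ := (AlgHom.mem_range _).mp hPφ
  have hq_mod : IsWeightedHomogeneous (wUV a b c) q ((e - c * e.toNat : ℤ) : ZMod c) := by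
    simpa using hφ.isWeightedHomogeneous_of_map hφinj (hq ▸ isWeightedHomogeneous_subZ hP)
  obtain ⟨Q, hQ, rfl⟩ := exists_isWeightedHomogeneous_subZ_eq hq_mod fun m _ => by
    have h1 : e ≤ e.toNat := Int.self_le_toNat e
    have h2 : (1 : ℤ) ≤ c := by exact_mod_cast hc
    have h3 : (0 : ℤ) ≤ e.toNat := Int.natCast_nonneg _
    nlinarith [mul_le_mul_of_nonneg_right h2 h3]
  have hXP : IsWeightedHomogeneous (wXYZ a b c) (X 2 ^ e.toNat * P) (e - c * e.toNat) := by
    convert ((isWeightedHomogeneous_X K _ 2).pow e.toNat).mul hP using 1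
    simp [wXYZ]
    ring
  refine ⟨e.toNat, (AlgHom.mem_range _).mpr ⟨Q, sub_eq_zero.mp ?_⟩⟩
  refine eq_zero_of_subZ_eq_zero hc.ne' ((hΦ hQ).sub hXP) ?_
  rw [map_sub, ← AlgHom.comp_apply, hcomm, AlgHom.comp_apply, hq, map_mul, map_pow]
  simp [subZ]

theorem mem_range_of_X_two_mul_mem_range [IsDomain K] (hΦ2 : Φ (X 2) = X 2)
    {φ₀ : MvPolynomial (Fin 2) K →ₐ[K] MvPolynomial (Fin 2) K} (hφ₀ : Function.Injective φ₀)
    (hcomm : subZ0.comp Φ = φ₀.comp subZ0) {t : MvPolynomial (Fin 3) K}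
    (ht : X 2 * t ∈ Φ.range) : t ∈ Φ.range := by
  obtain ⟨s, hs⟩ := (AlgHom.mem_range _).mp ht
  obtain ⟨s', rfl⟩ : X 2 ∣ s := by
    refine X_two_dvd_of_subZ0_eq_zero (hφ₀ ?_)
    rw [← AlgHom.comp_apply, ← hcomm, AlgHom.comp_apply, hs, map_mul, map_zero]
    simp [subZ0]
  refine (AlgHom.mem_range _).mpr ⟨s', mul_left_cancel₀ (X_ne_zero 2) ?_⟩
  rwa [← hΦ2, ← map_mul, hΦ2]

theorem mem_range_of_X_two_pow_mul_mem_range [IsDomain K] (hΦ2 : Φ (X 2) = X 2)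
    {φ₀ : MvPolynomial (Fin 2) K →ₐ[K] MvPolynomial (Fin 2) K} (hφ₀ : Function.Injective φ₀)
    (hcomm : subZ0.comp Φ = φ₀.comp subZ0) {t : MvPolynomial (Fin 3) K} {N : ℕ}
    (ht : X 2 ^ N * t ∈ Φ.range) : t ∈ Φ.range := by
  induction N generalizing t with
  | zero => simpa using ht
  | succ N ih =>
    exact mem_range_of_X_two_mul_mem_range hΦ2 hφ₀ hcomm (ih (by rwa [← mul_assoc, ← pow_succ]))

theorem surjective_of_subZ_comp [IsDomain K] (hc : 0 < c) (hΦ : PreservesWeight (wXYZ a b c) Φ)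
    (hφ : PreservesWeight (wUV a b c) φ) (hφbij : Function.Bijective φ)
    (hcomm : subZ.comp Φ = φ.comp subZ) (hΦ2 : Φ (X 2) = X 2)
    {φ₀ : MvPolynomial (Fin 2) K →ₐ[K] MvPolynomial (Fin 2) K} (hφ₀ : Function.Injective φ₀)
    (hcomm₀ : subZ0.comp Φ = φ₀.comp subZ0) : Function.Surjective Φ := by
  rw [← AlgHom.range_eq_top, eq_top_iff, ← adjoin_range_X, Algebra.adjoin_le_iff]
  rintro _ ⟨i, rfl⟩
  obtain ⟨N, hN⟩ := exists_X_two_pow_mul_mem_range hc hΦ hφ hφbij.1 hcomm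
    (isWeightedHomogeneous_X K _ i) ((AlgHom.mem_range _).mpr (hφbij.2 _))
  exact mem_range_of_X_two_pow_mul_mem_range hΦ2 hφ₀ hcomm₀ hN

end Bijectivity

theorem lift_criterion_general [Field K]
    (a b c : ℕ) (hb : 0 < b) (hc : 0 < c) (hab : b < a)
    (f g : MvPolynomial (Fin 2) K)
    (hbij : Function.Bijective (aeval ![f, g] : MvPolynomial (Fin 2) K →ₐ[K] MvPolynomial (Fin 2) K))
    (hgr : ∀ (d : ZMod c) (p : MvPolynomial (Fin 2) K),
      IsModHom a b c p d → IsModHom a b c ((aeval ![f, g]) p) d)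
    (hf : ∀ q : ℕ, b * q < a → coeff (Finsupp.single 1 q) f = 0)
    (hg : coeff 0 g = 0) :
    ∃ φ : MvPolynomial (Fin 3) K ≃ₐ[K] MvPolynomial (Fin 3) K,
      IsGradedAut a b c φ ∧ φ (X 2) = X 2 ∧ subZ (φ (X 0)) = f ∧ subZ (φ (X 1)) = g := by
  have hφ : PreservesWeight (wUV a b c) (aeval ![f, g]) := fun d p hp =>
    isModHom_iff.mp (hgr d p (isModHom_iff.mpr hp))
  have hf_mod : IsWeightedHomogeneous (wUV a b c) f ((a : ℤ) : ZMod c) := by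
    simpa [wUV] using hφ (isWeightedHomogeneous_X K (wUV a b c) 0)
  have hg_mod : IsWeightedHomogeneous (wUV a b c) g ((b : ℤ) : ZMod c) := by
    simpa [wUV] using hφ (isWeightedHomogeneous_X K (wUV a b c) 1)
  obtain ⟨hα, hδ⟩ := coeff_single_one_ne_zero_of_surjective
    (by simpa [constantCoeff_eq] using hf 0 (by omega)) hg (hf 1 (by omega)) hbij.2
  obtain ⟨F, hF, rfl⟩ :=
    exists_isWeightedHomogeneous_subZ_eq hf_mod (le_weight_of_coeff_single_one_eq_zero hf)
  obtain ⟨G, hG, rfl⟩ :=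
    exists_isWeightedHomogeneous_subZ_eq hg_mod (le_weight_of_coeff_zero_eq_zero hab.le hg)
  have hΦ := preservesWeight_aeval_wXYZ hF hG
  have hΦ2 : aeval ![F, G, X 2] (X 2 : MvPolynomial (Fin 3) K) = X 2 := aeval_X _ _
  have hinj := injective_of_subZ_comp hc.ne' hΦ hbij.1 (subZ_comp_aeval F G)
  have hsurj := surjective_of_subZ_comp hc hΦ hφ hbij (subZ_comp_aeval F G) hΦ2
    (injective_aeval_subZ0 hc.ne' hb hab hF hG hα hδ) (subZ0_comp_aeval F G)
  refine ⟨AlgEquiv.ofBijective _ ⟨hinj, hsurj⟩, fun d p hp => ?_, hΦ2, ?_, ?_⟩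
  · exact isWtHom_iff.mpr (hΦ (isWtHom_iff.mp hp))
  · simp
  · simp

/-- if the graded automorphism `φ̃ = (f̃, g̃)` of `K[u,v]` is such that
`f̃` contains no monomial `v^q` with `bq < a` and `g̃` has zero constant term, then
it lifts: there is a graded automorphism `φ` of `K[x,y,z]` fixing `z` with `α(φ) = φ̃`. -/
theorem lift_criterion [Field K] [IsAlgClosed K] [CharZero K]
    (a b c : ℕ) (ha : 0 < a) (hb : 0 < b) (hc : 0 < c) (hab : b < a)
    (hcop : Nat.gcd (Nat.gcd a b) c = 1)
    (f g : MvPolynomial (Fin 2) K)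
    (hbij : Function.Bijective (aeval ![f, g] : MvPolynomial (Fin 2) K →ₐ[K] MvPolynomial (Fin 2) K))
    (hgr : ∀ (d : ZMod c) (p : MvPolynomial (Fin 2) K),
      IsModHom a b c p d → IsModHom a b c ((aeval ![f, g]) p) d)
    (hf : ∀ q : ℕ, b * q < a → coeff (Finsupp.single 1 q) f = 0)
    (hg : coeff 0 g = 0) :
    ∃ φ : MvPolynomial (Fin 3) K ≃ₐ[K] MvPolynomial (Fin 3) K,
      IsGradedAut a b c φ ∧ φ (X 2) = X 2 ∧ subZ (φ (X 0)) = f ∧ subZ (φ (X 1)) = g :=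
  lift_criterion_general a b c hb hc hab f g hbij hgr hf hg
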